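/- arXiv:2511.19376 — 6 statements merged into one kernel-verified Lean document; each statement's English description precedes it below -/
import Mathlib

section
/- For real numbers α, β, γ, δ with σ = (α+β+γ+δ)/2 and ᾱ = σ−α, β̄ = σ−β, γ̄ = σ−γ, δ̄ = σ−δ all having nonzero sine, let M = (sin α sin β sin γ sin δ)/(sin ᾱ sin β̄ sin γ̄ sin δ̄). Then 1 − M = (sin σ · sin(ᾱ−β) · sin(γ̄−β) · sin(δ̄−β))/(sin ᾱ sin β̄ sin γ̄ sin δ̄). -/
/-!
By product-to-sum on the pairs (γ̄, ᾱ), (δ̄, β̄), (α, γ), (β, δ), the numerator of `1 - M` becomes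
`(cos (α - γ) - cos (β - δ)) * (cos (β + δ) - cos (α + γ)) / 4`, and sum-to-product turns each of
these two factors back into a product of two sines.
-/

open Real

theorem sin_bar_prod_sub_sin_prod {α β γ δ σ : ℝ} (hσ : σ = (α + β + γ + δ) / 2) :
    sin (σ - α) * sin (σ - β) * sin (σ - γ) * sin (σ - δ) - sin α * sin β * sin γ * sin δ =
      sin σ * sin (σ - α - β) * sin (σ - γ - β) * sin (σ - δ - β) := by
  have hγα_bar : 2 * sin (σ - γ) * sin (σ - α) = cos (α - γ) - cos (β + δ) := by
    rw [two_mul_sin_mul_sin]; congr 2 <;> linarith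
  have hδβ_bar : 2 * sin (σ - δ) * sin (σ - β) = cos (β - δ) - cos (α + γ) := by
    rw [two_mul_sin_mul_sin]; congr 2 <;> linarith
  have hdiff : cos (α - γ) - cos (β - δ) = 2 * sin (σ - α - β) * sin (σ - γ - β) := by
    rw [show σ - α - β = -((α - γ + (β - δ)) / 2) by linarith,
      show σ - γ - β = (α - γ - (β - δ)) / 2 by linarith, sin_neg, cos_sub_cos]
    ring
  have hsum : cos (β + δ) - cos (α + γ) = 2 * sin σ * sin (σ - δ - β) := by
    rw [show σ - δ - β = -((β + δ - (α + γ)) / 2) by linarith,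
      show σ = (β + δ + (α + γ)) / 2 by linarith, sin_neg, cos_sub_cos]
    ring
  calc sin (σ - α) * sin (σ - β) * sin (σ - γ) * sin (σ - δ) - sin α * sin β * sin γ * sin δ
      = ((2 * sin (σ - γ) * sin (σ - α)) * (2 * sin (σ - δ) * sin (σ - β)) -
          (2 * sin α * sin γ) * (2 * sin β * sin δ)) / 4 := by ring
    _ = ((cos (α - γ) - cos (β + δ)) * (cos (β - δ) - cos (α + γ)) -
          (cos (α - γ) - cos (α + γ)) * (cos (β - δ) - cos (β + δ))) / 4 := by
        rw [hγα_bar, hδβ_bar, two_mul_sin_mul_sin α γ, two_mul_sin_mul_sin β δ]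
    _ = (cos (α - γ) - cos (β - δ)) * (cos (β + δ) - cos (α + γ)) / 4 := by ring
    _ = sin σ * sin (σ - α - β) * sin (σ - γ - β) * sin (σ - δ - β) := by
        rw [hdiff, hsum]; ring

theorem modulus_identity (α β γ δ : ℝ)
    (σ : ℝ) (hσ : σ = (α + β + γ + δ) / 2)
    (hA : Real.sin (σ - α) ≠ 0) (hB : Real.sin (σ - β) ≠ 0)
    (hC : Real.sin (σ - γ) ≠ 0) (hD : Real.sin (σ - δ) ≠ 0) :
    1 - (Real.sin α * Real.sin β * Real.sin γ * Real.sin δ) /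
          (Real.sin (σ - α) * Real.sin (σ - β) * Real.sin (σ - γ) * Real.sin (σ - δ)) =
      (Real.sin σ * Real.sin ((σ - α) - β) * Real.sin ((σ - γ) - β) *
          Real.sin ((σ - δ) - β)) /
        (Real.sin (σ - α) * Real.sin (σ - β) * Real.sin (σ - γ) * Real.sin (σ - δ)) := by
  rw [← sin_bar_prod_sub_sin_prod hσ]
  field_simp
end

section
/- Suppose α, β, γ, δ ∈ (0, π) satisfy the elliptic condition: α ± β ± γ ± δ is not a multiple of 2π for all eight choices of signs. Then with σ = (α+β+γ+δ)/2, the numbers ᾱ = σ−α, β̄ = σ−β, γ̄ = σ−γ, δ̄ = σ−δ all have nonzero sine, and each of the six products (sin α sin β)/(sin ᾱ sin β̄), (sin α sin γ)/(sin ᾱ sin γ̄), (sin α sin δ)/(sin ᾱ sin δ̄), (sin β sin γ)/(sin β̄ sin γ̄), (sin β sin δ)/(sin β̄ sin δ̄), (sin γ sin δ)/(sin γ̄ sin δ̄), as well as M = (sin α sin β sin γ sin δ)/(sin ᾱ sin β̄ sin γ̄ sin δ̄), is neither 0 nor 1. -/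
/-!
Each quantity `sin (σ - ·)`, and each difference between a numerator and a denominator below,
is a product of sines of half signed sums `(α ± β ± γ ± δ) / 2`, which ellipticity keeps away
from `πℤ`. For a pair this is the product-to-sum identity
`sin α sin β - sin (σ - α) sin (σ - β) = sin σ · sin ((α + β - γ - δ) / 2)`; for the quadruple
`M` the difference factors as `sin σ` times the three sines `sin ((α ± β ∓ γ ∓ δ) / 2)`.
-/

open Real

/-- The elliptic condition: `α ± β ± γ ± δ` is not a multiple of `2π`
for all eight choices of signs. -/
def Elliptic (α β γ δ : ℝ) : Prop :=
  ∀ e₁ e₂ e₃ : ℝ, (e₁ = 1 ∨ e₁ = -1) → (e₂ = 1 ∨ e₂ = -1) → (e₃ = 1 ∨ e₃ = -1) →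
    ∀ n : ℤ, α + e₁ * β + e₂ * γ + e₃ * δ ≠ 2 * Real.pi * n

namespace Real

theorem sin_mul_sin_sub_sin_mul_sin_of_sub_eq_sub {x y u v : ℝ} (h : x - y = u - v) :
    sin x * sin y - sin u * sin v = sin (x + v) * sin (x - u) := by
  have hxy := two_mul_sin_mul_sin x y
  have huv := two_mul_sin_mul_sin u v
  have hr := two_mul_sin_mul_sin (x + v) (x - u)
  rw [show x + v - (x - u) = u + v by ring, show x + v + (x - u) = x + y by linarith] at hr
  rw [h] at hxy
  linarith

theorem sin_mul_sin_sub_sin_mul_sin_of_add_eq_add {x y u v : ℝ} (h : x + y = u + v) :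
    sin x * sin y - sin u * sin v = sin (x - u) * sin (v - x) := by
  have hxy := two_mul_sin_mul_sin x y
  have huv := two_mul_sin_mul_sin u v
  have hr := two_mul_sin_mul_sin (x - u) (v - x)
  rw [show x - u - (v - x) = x - y by linarith, show x - u + (v - x) = v - u by ring,
    ← cos_neg (v - u), neg_sub] at hr
  rw [h] at hxy
  linarith

variable {a b c d s : ℝ}

theorem sin_mul_sin_sub_sin_sub_mul_sin_sub (hs : 2 * s = a + b + c + d) :
    sin a * sin b - sin (s - a) * sin (s - b) = sin s * sin (s - c - d) := by
  rw [mul_comm (sin (s - a)), sin_mul_sin_sub_sin_mul_sin_of_sub_eq_sub (by ring)]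
  congr 2 <;> linarith

theorem sin_mul_sin_mul_sin_mul_sin_sub_sin_sub (hs : 2 * s = a + b + c + d) :
    sin a * sin b * sin c * sin d -
        sin (s - a) * sin (s - b) * sin (s - c) * sin (s - d) =
      sin s * sin (s - c - d) * sin (s - b - d) * sin (s - b - c) := by
  have hab := sin_mul_sin_sub_sin_sub_mul_sin_sub hs
  have hcd := sin_mul_sin_sub_sin_sub_mul_sin_sub (a := c) (b := d) (c := a) (d := b) (s := s)
    (by linarith)
  have hcross := sin_mul_sin_sub_sin_mul_sin_of_add_eq_add (x := s - c) (y := s - d) (u := a)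
    (v := b) (by linarith)
  rw [show s - a - b = -(s - c - d) by linarith, sin_neg] at hcd
  rw [show s - c - a = -(s - b - d) by linarith, sin_neg,
    show b - (s - c) = -(s - b - c) by ring, sin_neg] at hcross
  -- writing `hab`, `hcd`, `hcross` as `P - P' = D`, `Q - Q' = -D`, `Q' - P = R`,
  -- and the first two give `P Q - P' Q' = D (Q' - P)`, which is the goal `D R`
  linear_combination (sin c * sin d + sin s * sin (s - c - d)) * hab +
    (sin (s - a) * sin (s - b) + sin s * sin (s - c - d)) * hcd +
    (sin s * sin (s - c - d)) * hcross

end Real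

theorem Elliptic.sin_ne_zero {α β γ δ : ℝ} (hell : Elliptic α β γ δ) {e₁ e₂ e₃ : ℝ}
    (h₁ : e₁ = 1 ∨ e₁ = -1) (h₂ : e₂ = 1 ∨ e₂ = -1) (h₃ : e₃ = 1 ∨ e₃ = -1) {x : ℝ}
    (hx : 2 * x = α + e₁ * β + e₂ * γ + e₃ * δ ∨ 2 * x = -(α + e₁ * β + e₂ * γ + e₃ * δ)) :
    sin x ≠ 0 := by
  intro hsin
  obtain ⟨n, rfl⟩ := sin_eq_zero_iff.mp hsin
  rcases hx with hx | hx
  · exact hell e₁ e₂ e₃ h₁ h₂ h₃ n (by linarith)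
  · exact hell e₁ e₂ e₃ h₁ h₂ h₃ (-n) (by push_cast; linarith)

theorem div_ne_zero_and_ne_one_of_sub_ne_zero {K : Type*} [DivisionRing K] {x y : K}
    (hx : x ≠ 0) (hy : y ≠ 0) (hxy : x - y ≠ 0) : x / y ≠ 0 ∧ x / y ≠ 1 :=
  ⟨div_ne_zero hx hy, fun h => hxy (by rw [(div_eq_one_iff_eq hy).mp h, sub_self])⟩

theorem elliptic_products_ne_zero_one (α β γ δ : ℝ)
    (hα : α ∈ Set.Ioo 0 Real.pi) (hβ : β ∈ Set.Ioo 0 Real.pi)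
    (hγ : γ ∈ Set.Ioo 0 Real.pi) (hδ : δ ∈ Set.Ioo 0 Real.pi)
    (hell : Elliptic α β γ δ)
    (σ : ℝ) (hσ : σ = (α + β + γ + δ) / 2) :
    (Real.sin (σ - α) ≠ 0 ∧ Real.sin (σ - β) ≠ 0 ∧
     Real.sin (σ - γ) ≠ 0 ∧ Real.sin (σ - δ) ≠ 0) ∧
    (∀ p ∈ ({(Real.sin α * Real.sin β) / (Real.sin (σ - α) * Real.sin (σ - β)),
              (Real.sin α * Real.sin γ) / (Real.sin (σ - α) * Real.sin (σ - γ)),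
              (Real.sin α * Real.sin δ) / (Real.sin (σ - α) * Real.sin (σ - δ)),
              (Real.sin β * Real.sin γ) / (Real.sin (σ - β) * Real.sin (σ - γ)),
              (Real.sin β * Real.sin δ) / (Real.sin (σ - β) * Real.sin (σ - δ)),
              (Real.sin γ * Real.sin δ) / (Real.sin (σ - γ) * Real.sin (σ - δ)),
              (Real.sin α * Real.sin β * Real.sin γ * Real.sin δ) /
                (Real.sin (σ - α) * Real.sin (σ - β) * Real.sin (σ - γ) *
                  Real.sin (σ - δ))} : Set ℝ), p ≠ 0 ∧ p ≠ 1) := by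
  have hσ₂ : 2 * σ = α + β + γ + δ := by rw [hσ]; ring
  have hsin : ∀ x ∈ Set.Ioo 0 π, sin x ≠ 0 := fun x hx => (sin_pos_of_pos_of_lt_pi hx.1 hx.2).ne'
  have hα₀ := hsin α hα; have hβ₀ := hsin β hβ; have hγ₀ := hsin γ hγ; have hδ₀ := hsin δ hδ
  have hα' : sin (σ - α) ≠ 0 :=
    hell.sin_ne_zero (.inr rfl) (.inr rfl) (.inr rfl) (.inr (by linarith))
  have hβ' : sin (σ - β) ≠ 0 :=
    hell.sin_ne_zero (.inr rfl) (.inl rfl) (.inl rfl) (.inl (by linarith))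
  have hγ' : sin (σ - γ) ≠ 0 :=
    hell.sin_ne_zero (.inl rfl) (.inr rfl) (.inl rfl) (.inl (by linarith))
  have hδ' : sin (σ - δ) ≠ 0 :=
    hell.sin_ne_zero (.inl rfl) (.inl rfl) (.inr rfl) (.inl (by linarith))
  have hσ' : sin σ ≠ 0 := hell.sin_ne_zero (.inl rfl) (.inl rfl) (.inl rfl) (.inl (by linarith))
  have hγδ : sin (σ - γ - δ) ≠ 0 :=
    hell.sin_ne_zero (.inl rfl) (.inr rfl) (.inr rfl) (.inl (by linarith))
  have hβδ : sin (σ - β - δ) ≠ 0 :=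
    hell.sin_ne_zero (.inr rfl) (.inl rfl) (.inr rfl) (.inl (by linarith))
  have hβγ : sin (σ - β - γ) ≠ 0 :=
    hell.sin_ne_zero (.inr rfl) (.inr rfl) (.inl rfl) (.inl (by linarith))
  have hαδ : sin (σ - α - δ) ≠ 0 :=
    hell.sin_ne_zero (.inr rfl) (.inr rfl) (.inl rfl) (.inr (by linarith))
  have hαγ : sin (σ - α - γ) ≠ 0 :=
    hell.sin_ne_zero (.inr rfl) (.inl rfl) (.inr rfl) (.inr (by linarith))
  have hαβ : sin (σ - α - β) ≠ 0 :=
    hell.sin_ne_zero (.inl rfl) (.inr rfl) (.inr rfl) (.inr (by linarith))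
  refine ⟨⟨hα', hβ', hγ', hδ'⟩, ?_⟩
  simp only [Set.mem_insert_iff, Set.mem_singleton_iff, forall_eq_or_imp, forall_eq]
  refine ⟨?_, ?_, ?_, ?_, ?_, ?_, ?_⟩ <;>
    refine div_ne_zero_and_ne_one_of_sub_ne_zero (by simp only [ne_eq, mul_eq_zero]; tauto)
      (by simp only [ne_eq, mul_eq_zero]; tauto) ?_
  · rw [sin_mul_sin_sub_sin_sub_mul_sin_sub (c := γ) (d := δ) (by linarith)]
    exact mul_ne_zero hσ' hγδ
  · rw [sin_mul_sin_sub_sin_sub_mul_sin_sub (c := β) (d := δ) (by linarith)]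
    exact mul_ne_zero hσ' hβδ
  · rw [sin_mul_sin_sub_sin_sub_mul_sin_sub (c := β) (d := γ) (by linarith)]
    exact mul_ne_zero hσ' hβγ
  · rw [sin_mul_sin_sub_sin_sub_mul_sin_sub (c := α) (d := δ) (by linarith)]
    exact mul_ne_zero hσ' hαδ
  · rw [sin_mul_sin_sub_sin_sub_mul_sin_sub (c := α) (d := γ) (by linarith)]
    exact mul_ne_zero hσ' hαγ
  · rw [sin_mul_sin_sub_sin_sub_mul_sin_sub (c := α) (d := β) (by linarith)]
    exact mul_ne_zero hσ' hαβ
  · rw [sin_mul_sin_mul_sin_mul_sin_sub_sin_sub hσ₂]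
    exact mul_ne_zero (mul_ne_zero (mul_ne_zero hσ' hγδ) hβδ) hβγ
end

section
/- Let α, β, γ, δ ∈ (0, π) be elliptic (α ± β ± γ ± δ ∉ 2πℤ for all sign choices), set σ = (α+β+γ+δ)/2, ᾱ = σ−α, etc., and M = (sin α sin β sin γ sin δ)/(sin ᾱ sin β̄ sin γ̄ sin δ̄). If M > 0, then ᾱ, β̄, γ̄, δ̄ all lie in the open interval (0, π). -/
/-!
With σ = (α+β+γ+δ)/2, two barred angles σ - α and σ - β have sum γ + δ ∈ (0, 2π) and difference
β - α ∈ (-π, π), so at most one barred angle lies outside (0, π). All four lie in (-π/2, 3π/2),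
where the sine is positive exactly on (0, π). The numerator of M is positive, so its denominator is
positive; if one barred angle were outside (0, π), the other three sines would be positive, forcing
the fourth to be positive too, a contradiction.
-/

open Real

open Set

namespace Real

theorem mem_Ioo_of_sin_pos {x : ℝ} (h₁ : -π ≤ x) (h₂ : x ≤ 2 * π) (hx : 0 < sin x) :
    x ∈ Ioo 0 π := by
  by_contra h
  rw [mem_Ioo, not_and_or, not_lt, not_lt] at h
  rcases h with h | h
  · exact (sin_nonpos_of_nonpos_of_neg_pi_le h h₁).not_gt hx
  · have := sin_nonneg_of_nonneg_of_le_pi (x := x - π) (by linarith) (by linarith)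
    rw [sin_sub_pi] at this
    linarith

end Real

section BarredAngles

variable {α β γ δ σ : ℝ} (hα : α ∈ Ioo 0 π) (hβ : β ∈ Ioo 0 π) (hγ : γ ∈ Ioo 0 π)
  (hδ : δ ∈ Ioo 0 π) (hσ : 2 * σ = α + β + γ + δ)
include hα hβ hγ hδ hσ

theorem sub_mem_Ioo_of_sub_notMem_Ioo (h : σ - α ∉ Ioo 0 π) : σ - β ∈ Ioo 0 π := by
  obtain ⟨hα₀, hα₁⟩ := hα
  obtain ⟨hβ₀, hβ₁⟩ := hβ
  obtain ⟨hγ₀, hγ₁⟩ := hγ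
  obtain ⟨hδ₀, hδ₁⟩ := hδ
  rw [mem_Ioo, not_and_or, not_lt, not_lt] at h
  constructor <;> by_contra! h' <;> rcases h with h | h <;> linarith

theorem sub_mem_Ioo_of_prod_sin_sub_pos
    (h : 0 < sin (σ - α) * sin (σ - β) * sin (σ - γ) * sin (σ - δ)) : σ - α ∈ Ioo 0 π := by
  by_contra hout
  have hb := sub_mem_Ioo_of_sub_notMem_Ioo hα hβ hγ hδ hσ hout
  have hc := sub_mem_Ioo_of_sub_notMem_Ioo hα hγ hβ hδ (by linarith) hout
  have hd := sub_mem_Ioo_of_sub_notMem_Ioo hα hδ hβ hγ (by linarith) hout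
  have hrest : 0 < sin (σ - β) * sin (σ - γ) * sin (σ - δ) := by
    have := sin_pos_of_mem_Ioo hb
    have := sin_pos_of_mem_Ioo hc
    have := sin_pos_of_mem_Ioo hd
    positivity
  have ha : 0 < sin (σ - α) := pos_of_mul_pos_left (h.trans_eq (by ring)) hrest.le
  obtain ⟨hα₀, hα₁⟩ := hα
  obtain ⟨hβ₀, hβ₁⟩ := hβ
  obtain ⟨hγ₀, hγ₁⟩ := hγ
  obtain ⟨hδ₀, hδ₁⟩ := hδ
  exact hout (mem_Ioo_of_sin_pos (by linarith) (by linarith) ha)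

end BarredAngles

theorem barred_angles_in_Ioo_general (α β γ δ : ℝ)
    (hα : α ∈ Set.Ioo 0 Real.pi) (hβ : β ∈ Set.Ioo 0 Real.pi)
    (hγ : γ ∈ Set.Ioo 0 Real.pi) (hδ : δ ∈ Set.Ioo 0 Real.pi)
    (σ : ℝ) (hσ : σ = (α + β + γ + δ) / 2)
    (hM : (Real.sin α * Real.sin β * Real.sin γ * Real.sin δ) /
        (Real.sin (σ - α) * Real.sin (σ - β) * Real.sin (σ - γ) * Real.sin (σ - δ)) > 0) :
    σ - α ∈ Set.Ioo 0 Real.pi ∧ σ - β ∈ Set.Ioo 0 Real.pi ∧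
    σ - γ ∈ Set.Ioo 0 Real.pi ∧ σ - δ ∈ Set.Ioo 0 Real.pi := by
  have hσ₂ : 2 * σ = α + β + γ + δ := by rw [hσ]; ring
  have hnum : 0 < sin α * sin β * sin γ * sin δ := by
    have := sin_pos_of_mem_Ioo hα
    have := sin_pos_of_mem_Ioo hβ
    have := sin_pos_of_mem_Ioo hγ
    have := sin_pos_of_mem_Ioo hδ
    positivity
  have hden := (div_pos_iff_of_pos_left hnum).mp hM
  exact ⟨sub_mem_Ioo_of_prod_sin_sub_pos hα hβ hγ hδ hσ₂ hden,
    sub_mem_Ioo_of_prod_sin_sub_pos hβ hα hγ hδ (by linarith) (hden.trans_eq (by ring)),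
    sub_mem_Ioo_of_prod_sin_sub_pos hγ hα hβ hδ (by linarith) (hden.trans_eq (by ring)),
    sub_mem_Ioo_of_prod_sin_sub_pos hδ hα hβ hγ (by linarith) (hden.trans_eq (by ring))⟩

theorem barred_angles_in_Ioo (α β γ δ : ℝ)
    (hα : α ∈ Set.Ioo 0 Real.pi) (hβ : β ∈ Set.Ioo 0 Real.pi)
    (hγ : γ ∈ Set.Ioo 0 Real.pi) (hδ : δ ∈ Set.Ioo 0 Real.pi)
    (hell : Elliptic α β γ δ)
    (σ : ℝ) (hσ : σ = (α + β + γ + δ) / 2)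
    (hM : (Real.sin α * Real.sin β * Real.sin γ * Real.sin δ) /
        (Real.sin (σ - α) * Real.sin (σ - β) * Real.sin (σ - γ) * Real.sin (σ - δ)) > 0) :
    σ - α ∈ Set.Ioo 0 Real.pi ∧ σ - β ∈ Set.Ioo 0 Real.pi ∧
    σ - γ ∈ Set.Ioo 0 Real.pi ∧ σ - δ ∈ Set.Ioo 0 Real.pi :=
  barred_angles_in_Ioo_general α β γ δ hα hβ hγ hδ σ hσ hM
end

section
/- Let α, β, γ, δ ∈ (0, π) be elliptic with M > 0, and define r = (sin α sin δ)/(sin ᾱ sin δ̄), s = (sin γ sin δ)/(sin γ̄ sin δ̄), f = (sin α sin γ)/(sin ᾱ sin γ̄), M = (sin α sin β sin γ sin δ)/(sin ᾱ sin β̄ sin γ̄ sin δ̄). Then (r−1)(s−1)(f−1)(1−M) > 0. -/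
open Real

lemma sinKey (x y w : ℝ) :
    Real.sin x * Real.sin y - Real.sin (w - x) * Real.sin (w - y)
      = Real.sin w * Real.sin (x + y - w) := by
  simp only [Real.sin_sub, Real.sin_add, Real.cos_sub, Real.cos_add]
  linear_combination (-(Real.sin x * Real.sin y)) * Real.sin_sq_add_cos_sq w

theorem rsf_product_positive (α β γ δ : ℝ)
    (hα : α ∈ Set.Ioo 0 Real.pi) (hβ : β ∈ Set.Ioo 0 Real.pi)
    (hγ : γ ∈ Set.Ioo 0 Real.pi) (hδ : δ ∈ Set.Ioo 0 Real.pi)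
    (hell : Elliptic α β γ δ)
    (σ : ℝ) (hσ : σ = (α + β + γ + δ) / 2)
    (r s f M : ℝ)
    (hr : r = (Real.sin α * Real.sin δ) / (Real.sin (σ - α) * Real.sin (σ - δ)))
    (hs : s = (Real.sin γ * Real.sin δ) / (Real.sin (σ - γ) * Real.sin (σ - δ)))
    (hf : f = (Real.sin α * Real.sin γ) / (Real.sin (σ - α) * Real.sin (σ - γ)))
    (hMdef : M = (Real.sin α * Real.sin β * Real.sin γ * Real.sin δ) /
        (Real.sin (σ - α) * Real.sin (σ - β) * Real.sin (σ - γ) * Real.sin (σ - δ)))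
    (hM : M > 0) :
    (r - 1) * (s - 1) * (f - 1) * (1 - M) > 0 := by
  have ha : 0 < Real.sin α := Real.sin_pos_of_pos_of_lt_pi hα.1 hα.2
  have hb : 0 < Real.sin β := Real.sin_pos_of_pos_of_lt_pi hβ.1 hβ.2
  have hc : 0 < Real.sin γ := Real.sin_pos_of_pos_of_lt_pi hγ.1 hγ.2
  have hd : 0 < Real.sin δ := Real.sin_pos_of_pos_of_lt_pi hδ.1 hδ.2
  -- nonvanishing of various sines from ellipticity
  have hA : Real.sin (σ - α) ≠ 0 := by
    intro h
    obtain ⟨n, hn⟩ := Real.sin_eq_zero_iff.mp h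
    exact hell (-1) (-1) (-1) (Or.inr rfl) (Or.inr rfl) (Or.inr rfl) (-n)
      (by push_cast; linarith)
  have hB : Real.sin (σ - β) ≠ 0 := by
    intro h
    obtain ⟨n, hn⟩ := Real.sin_eq_zero_iff.mp h
    exact hell (-1) 1 1 (Or.inr rfl) (Or.inl rfl) (Or.inl rfl) n
      (by linarith)
  have hC : Real.sin (σ - γ) ≠ 0 := by
    intro h
    obtain ⟨n, hn⟩ := Real.sin_eq_zero_iff.mp h
    exact hell 1 (-1) 1 (Or.inl rfl) (Or.inr rfl) (Or.inl rfl) n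
      (by linarith)
  have hD : Real.sin (σ - δ) ≠ 0 := by
    intro h
    obtain ⟨n, hn⟩ := Real.sin_eq_zero_iff.mp h
    exact hell 1 1 (-1) (Or.inl rfl) (Or.inl rfl) (Or.inr rfl) n
      (by linarith)
  have hS : Real.sin σ ≠ 0 := by
    intro h
    obtain ⟨n, hn⟩ := Real.sin_eq_zero_iff.mp h
    exact hell 1 1 1 (Or.inl rfl) (Or.inl rfl) (Or.inl rfl) n
      (by linarith)
  have hp : Real.sin (α + δ - σ) ≠ 0 := by
    intro h
    obtain ⟨n, hn⟩ := Real.sin_eq_zero_iff.mp h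
    exact hell (-1) (-1) 1 (Or.inr rfl) (Or.inr rfl) (Or.inl rfl) n
      (by linarith)
  have hq : Real.sin (γ + δ - σ) ≠ 0 := by
    intro h
    obtain ⟨n, hn⟩ := Real.sin_eq_zero_iff.mp h
    exact hell 1 (-1) (-1) (Or.inl rfl) (Or.inr rfl) (Or.inr rfl) (-n)
      (by push_cast; linarith)
  have ht : Real.sin (α + γ - σ) ≠ 0 := by
    intro h
    obtain ⟨n, hn⟩ := Real.sin_eq_zero_iff.mp h
    exact hell (-1) 1 (-1) (Or.inr rfl) (Or.inl rfl) (Or.inr rfl) n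
      (by linarith)
  -- positivity of the denominator of M
  have habcd : 0 < Real.sin α * Real.sin β * Real.sin γ * Real.sin δ := by positivity
  have hABCD : 0 < Real.sin (σ - α) * Real.sin (σ - β) * Real.sin (σ - γ) * Real.sin (σ - δ) := by
    rcases div_pos_iff.mp (hMdef ▸ hM) with ⟨_, h⟩ | ⟨h, _⟩
    · exact h
    · linarith
  -- key trig identities
  have k1 := sinKey α δ σ
  have k2 := sinKey γ δ σ
  have k3 := sinKey α γ σ
  have k4 : Real.sin (σ - α) * Real.sin (σ - β) - Real.sin α * Real.sin β
      = Real.sin σ * Real.sin (γ + δ - σ) := by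
    have h := sinKey (σ - α) (σ - β) σ
    have e1 : σ - (σ - α) = α := by ring
    have e2 : σ - (σ - β) = β := by ring
    have e3 : σ - α + (σ - β) - σ = γ + δ - σ := by rw [hσ]; ring
    rw [e1, e2, e3] at h
    linarith
  have k5 : Real.sin (σ - γ) * Real.sin (σ - δ) - Real.sin γ * Real.sin δ
      = -(Real.sin σ * Real.sin (γ + δ - σ)) := by
    have h := sinKey (σ - γ) (σ - δ) σ
    have e1 : σ - (σ - γ) = γ := by ring
    have e2 : σ - (σ - δ) = δ := by ring
    have e3 : σ - γ + (σ - δ) - σ = -(γ + δ - σ) := by ring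
    rw [e1, e2, e3, Real.sin_neg] at h
    linarith
  have k6 : Real.sin γ * Real.sin δ - Real.sin (α + δ - σ) * Real.sin (α + γ - σ)
      = Real.sin (σ - β) * Real.sin (σ - α) := by
    have h := sinKey γ δ (α + γ + δ - σ)
    have e1 : α + γ + δ - σ - γ = α + δ - σ := by ring
    have e2 : α + γ + δ - σ - δ = α + γ - σ := by ring
    have e3 : γ + δ - (α + γ + δ - σ) = σ - α := by ring
    have e4 : α + γ + δ - σ = σ - β := by rw [hσ]; ring
    rw [e1, e2, e3, e4] at h
    linarith
  -- the quartic identity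
  have hcd : Real.sin γ * Real.sin δ
      = Real.sin (α + δ - σ) * Real.sin (α + γ - σ) + Real.sin α * Real.sin β
        + Real.sin σ * Real.sin (γ + δ - σ) := by nlinarith [k4, k6]
  have hCD : Real.sin (σ - γ) * Real.sin (σ - δ)
      = Real.sin γ * Real.sin δ - Real.sin σ * Real.sin (γ + δ - σ) := by linarith
  have h4 : Real.sin (σ - α) * Real.sin (σ - β)
      = Real.sin α * Real.sin β + Real.sin σ * Real.sin (γ + δ - σ) := by linarith
  have k7 : Real.sin (σ - α) * Real.sin (σ - β) * Real.sin (σ - γ) * Real.sin (σ - δ)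
        - Real.sin α * Real.sin β * Real.sin γ * Real.sin δ
      = Real.sin σ * Real.sin (α + δ - σ) * Real.sin (γ + δ - σ) * Real.sin (α + γ - σ) := by
    linear_combination (Real.sin (σ - γ) * Real.sin (σ - δ)) * h4
      + (Real.sin α * Real.sin β + Real.sin σ * Real.sin (γ + δ - σ)) * hCD
      + (Real.sin σ * Real.sin (γ + δ - σ)) * hcd
  -- expressions for the four factors
  have hr1 : r - 1 = Real.sin σ * Real.sin (α + δ - σ)
      / (Real.sin (σ - α) * Real.sin (σ - δ)) := by
    rw [hr, div_sub_one (mul_ne_zero hA hD), k1]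
  have hs1 : s - 1 = Real.sin σ * Real.sin (γ + δ - σ)
      / (Real.sin (σ - γ) * Real.sin (σ - δ)) := by
    rw [hs, div_sub_one (mul_ne_zero hC hD), k2]
  have hf1 : f - 1 = Real.sin σ * Real.sin (α + γ - σ)
      / (Real.sin (σ - α) * Real.sin (σ - γ)) := by
    rw [hf, div_sub_one (mul_ne_zero hA hC), k3]
  have hm1 : 1 - M = Real.sin σ * Real.sin (α + δ - σ) * Real.sin (γ + δ - σ)
        * Real.sin (α + γ - σ)
      / (Real.sin (σ - α) * Real.sin (σ - β) * Real.sin (σ - γ) * Real.sin (σ - δ)) := by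
    rw [hMdef, one_sub_div (ne_of_gt hABCD), k7]
  have hX : Real.sin σ ^ 2 * Real.sin (α + δ - σ) * Real.sin (γ + δ - σ)
      * Real.sin (α + γ - σ) ≠ 0 :=
    mul_ne_zero (mul_ne_zero (mul_ne_zero (pow_ne_zero 2 hS) hp) hq) ht
  have hACD : Real.sin (σ - α) * Real.sin (σ - γ) * Real.sin (σ - δ) ≠ 0 :=
    mul_ne_zero (mul_ne_zero hA hC) hD
  have hprod : (r - 1) * (s - 1) * (f - 1) * (1 - M)
      = (Real.sin σ ^ 2 * Real.sin (α + δ - σ) * Real.sin (γ + δ - σ)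
          * Real.sin (α + γ - σ)) ^ 2
        / ((Real.sin (σ - α) * Real.sin (σ - γ) * Real.sin (σ - δ)) ^ 2
          * (Real.sin (σ - α) * Real.sin (σ - β) * Real.sin (σ - γ) * Real.sin (σ - δ))) := by
    rw [hr1, hs1, hf1, hm1]
    field_simp
  rw [hprod]
  apply div_pos
  · exact lt_of_le_of_ne (sq_nonneg _) (Ne.symm (pow_ne_zero 2 hX))
  · exact mul_pos (lt_of_le_of_ne (sq_nonneg _) (Ne.symm (pow_ne_zero 2 hACD))) hABCD
end

section
/- For all real t, the quadruple (w₁, t, w₂, z) with w₁ = ((√2 − √6)t + √(2 + 6t² + 3t⁴))/(1 + √3 + 3t²), w₂ = ((√6 − √2)t + √(2 + 6t² + 3t⁴))/(1 + √3 + 3t²), z = √(2 + 6t² + 3t⁴)/(1 + √3 + √3 t²) satisfies the equation (1 + √3 + 3t²)w₁² + 2√2(√3 − 1)t·w₁ − t² − √3 + 1 = 0. -/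
/-! $w_1$ is the root $(-b + \sqrt{\Delta})/(2a)$ of the quadratic $a w^2 + b w + c$ with
$a = 1 + \sqrt3 + 3t^2$, $b = 2\sqrt2(\sqrt3 - 1)t$, $c = 1 - \sqrt3 - t^2$, because its
discriminant is $\Delta = 4(2 + 6t^2 + 3t^4)$. -/

open Real

lemma sqrt_six_eq_sqrt_two_mul_sqrt_three : √6 = √2 * √3 := by
  rw [← Real.sqrt_mul (by norm_num)]
  norm_num

lemma discrim_bricard_first_equation (t : ℝ) :
    discrim (1 + √3 + 3 * t ^ 2) (2 * √2 * (√3 - 1) * t) (1 - √3 - t ^ 2) =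
      (2 * √(2 + 6 * t ^ 2 + 3 * t ^ 4)) * (2 * √(2 + 6 * t ^ 2 + 3 * t ^ 4)) := by
  have h2 : √2 ^ 2 = 2 := Real.sq_sqrt (by norm_num)
  have h3 : √3 ^ 2 = 3 := Real.sq_sqrt (by norm_num)
  have hR : √(2 + 6 * t ^ 2 + 3 * t ^ 4) ^ 2 = 2 + 6 * t ^ 2 + 3 * t ^ 4 :=
    Real.sq_sqrt (by positivity)
  rw [discrim]
  linear_combination 4 * (√3 - 1) ^ 2 * t ^ 2 * h2 + (8 * t ^ 2 + 4) * h3 - 4 * hR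

theorem example1_bricard_first_equation_general (t : ℝ)
    (w₁ : ℝ)
    (hw₁ : w₁ = ((Real.sqrt 2 - Real.sqrt 6) * t +
        Real.sqrt (2 + 6 * t ^ 2 + 3 * t ^ 4)) / (1 + Real.sqrt 3 + 3 * t ^ 2)) :
    (1 + Real.sqrt 3 + 3 * t ^ 2) * w₁ ^ 2 +
      2 * Real.sqrt 2 * (Real.sqrt 3 - 1) * t * w₁ - t ^ 2 - Real.sqrt 3 + 1 = 0 := by
  have ha : 1 + √3 + 3 * t ^ 2 ≠ 0 := by positivity
  have hroot : w₁ = (-(2 * √2 * (√3 - 1) * t) + 2 * √(2 + 6 * t ^ 2 + 3 * t ^ 4)) /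
      (2 * (1 + √3 + 3 * t ^ 2)) := by
    rw [hw₁, sqrt_six_eq_sqrt_two_mul_sqrt_three]
    field_simp
    ring
  have hquad := (quadratic_eq_zero_iff ha (discrim_bricard_first_equation t) w₁).mpr
    (Or.inl hroot)
  linear_combination hquad

theorem example1_bricard_first_equation (t : ℝ)
    (w₁ w₂ z : ℝ)
    (hw₁ : w₁ = ((Real.sqrt 2 - Real.sqrt 6) * t +
        Real.sqrt (2 + 6 * t ^ 2 + 3 * t ^ 4)) / (1 + Real.sqrt 3 + 3 * t ^ 2))
    (hw₂ : w₂ = ((Real.sqrt 6 - Real.sqrt 2) * t +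
        Real.sqrt (2 + 6 * t ^ 2 + 3 * t ^ 4)) / (1 + Real.sqrt 3 + 3 * t ^ 2))
    (hz : z = Real.sqrt (2 + 6 * t ^ 2 + 3 * t ^ 4) /
        (1 + Real.sqrt 3 + Real.sqrt 3 * t ^ 2)) :
    (1 + Real.sqrt 3 + 3 * t ^ 2) * w₁ ^ 2 +
      2 * Real.sqrt 2 * (Real.sqrt 3 - 1) * t * w₁ - t ^ 2 - Real.sqrt 3 + 1 = 0 :=
  example1_bricard_first_equation_general t w₁ hw₁
end

section
/- Suppose α, β, γ, δ ∈ (0, π), σ = (α+β+γ+δ)/2, and ᾱ = σ−α, β̄ = σ−β, γ̄ = σ−γ, δ̄ = σ−δ. If sin ᾱ, sin β̄, sin γ̄, sin δ̄ are all negative, a contradiction arises; hence if they all have the same sign, it must be positive, i.e., ᾱ, β̄, γ̄, δ̄ ∈ (0, π). -/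
open Real

namespace Real

lemma mem_Ioo_of_sin_pos_s17 {x : ℝ} (hlo : -π ≤ x) (hhi : x ≤ 2 * π) (hsin : 0 < sin x) :
    x ∈ Set.Ioo 0 π := by
  refine ⟨lt_of_not_ge fun hx => ?_, lt_of_not_ge fun hx => ?_⟩
  · exact hsin.not_ge (sin_nonpos_of_nonpos_of_neg_pi_le hx hlo)
  · have : 0 ≤ sin (x - π) := sin_nonneg_of_nonneg_of_le_pi (by linarith) (by linarith)
    rw [sin_sub_pi] at this
    linarith

lemma neg_or_pi_lt_of_sin_neg {x : ℝ} (hsin : sin x < 0) : x < 0 ∨ π < x := by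
  by_contra! hx
  exact hsin.not_ge (sin_nonneg_of_nonneg_of_le_pi hx.1 hx.2)

end Real

/-- The four numbers `σ - α, …, σ - δ` sum to `2σ ∈ (0, 4π)`, so they cannot all be negative or
all exceed `π`, and one below `0` with another above `π` would force two of the angles more than
`π` apart. -/
lemma not_forall_sin_half_sum_sub_neg {α β γ δ : ℝ}
    (hα : α ∈ Set.Ioo 0 π) (hβ : β ∈ Set.Ioo 0 π)
    (hγ : γ ∈ Set.Ioo 0 π) (hδ : δ ∈ Set.Ioo 0 π) (σ : ℝ) (hσ : σ = (α + β + γ + δ) / 2) :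
    ¬(sin (σ - α) < 0 ∧ sin (σ - β) < 0 ∧ sin (σ - γ) < 0 ∧ sin (σ - δ) < 0) := by
  rintro ⟨ha, hb, hc, hd⟩
  obtain ⟨_, _⟩ := hα
  obtain ⟨_, _⟩ := hβ
  obtain ⟨_, _⟩ := hγ
  obtain ⟨_, _⟩ := hδ
  rcases neg_or_pi_lt_of_sin_neg ha with _ | _ <;>
  rcases neg_or_pi_lt_of_sin_neg hb with _ | _ <;>
  rcases neg_or_pi_lt_of_sin_neg hc with _ | _ <;>
  rcases neg_or_pi_lt_of_sin_neg hd with _ | _ <;>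
  linarith

theorem same_sign_implies_positive (α β γ δ : ℝ)
    (hα : α ∈ Set.Ioo 0 Real.pi) (hβ : β ∈ Set.Ioo 0 Real.pi)
    (hγ : γ ∈ Set.Ioo 0 Real.pi) (hδ : δ ∈ Set.Ioo 0 Real.pi)
    (σ : ℝ) (hσ : σ = (α + β + γ + δ) / 2)
    (hsign : (0 < Real.sin (σ - α) ∧ 0 < Real.sin (σ - β) ∧
              0 < Real.sin (σ - γ) ∧ 0 < Real.sin (σ - δ)) ∨
             (Real.sin (σ - α) < 0 ∧ Real.sin (σ - β) < 0 ∧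
              Real.sin (σ - γ) < 0 ∧ Real.sin (σ - δ) < 0)) :
    σ - α ∈ Set.Ioo 0 Real.pi ∧ σ - β ∈ Set.Ioo 0 Real.pi ∧
    σ - γ ∈ Set.Ioo 0 Real.pi ∧ σ - δ ∈ Set.Ioo 0 Real.pi := by
  rcases hsign with ⟨ha, hb, hc, hd⟩ | hneg
  · obtain ⟨_, _⟩ := hα
    obtain ⟨_, _⟩ := hβ
    obtain ⟨_, _⟩ := hγ
    obtain ⟨_, _⟩ := hδ
    exact ⟨mem_Ioo_of_sin_pos_s17 (by linarith) (by linarith) ha,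
      mem_Ioo_of_sin_pos_s17 (by linarith) (by linarith) hb,
      mem_Ioo_of_sin_pos_s17 (by linarith) (by linarith) hc,
      mem_Ioo_of_sin_pos_s17 (by linarith) (by linarith) hd⟩
  · exact absurd hneg (not_forall_sin_half_sum_sub_neg hα hβ hγ hδ σ hσ)
end
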